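/- A γ-q-critical tree T of order n(T) ≥ 3 satisfies q = n(T) − 1 if and only if T is isomorphic to the corona K_{1,r} ⊙ K_1 for some r ≥ 1 (equivalently, T is a slightly wounded spider obtained by subdividing all but one edge of a star K_{1,r+1}). -/

import Mathlib

open SimpleGraph

/-- `D` is a dominating set of `G`. -/
def SimpleGraph.IsDomSet {V : Type*} (G : SimpleGraph V) (D : Set V) : Prop :=
  ∀ v ∉ D, ∃ u ∈ D, G.Adj u v

/-- The domination number of `G`. -/
noncomputable def SimpleGraph.domNum {V : Type*} [Fintype V] (G : SimpleGraph V) : ℕ :=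
  sInf {k | ∃ D : Finset V, D.card = k ∧ G.IsDomSet ↑D}

/-- The graph obtained from `G` by subdividing each edge in `F` once: each `e ∈ F`
contributes a new vertex adjacent to the two endpoints of `e`, and the edges of `F`
are removed. -/
def SimpleGraph.subdiv {V : Type*} (G : SimpleGraph V) (F : Finset (Sym2 V)) :
    SimpleGraph (V ⊕ {e : Sym2 V // e ∈ F}) :=
  SimpleGraph.fromRel (fun a b => match a, b with
    | Sum.inl u, Sum.inl v => G.Adj u v ∧ s(u, v) ∉ F
    | Sum.inl u, Sum.inr e => u ∈ (e : Sym2 V)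
    | _, _ => False)

/-- `G` is `γ`-`q`-critical: subdividing any `q` edges increases the domination number,
while some set of `q - 1` edges can be subdivided without increasing it. -/
def SimpleGraph.IsQCritical {V : Type*} [Fintype V] (G : SimpleGraph V) (q : ℕ) : Prop :=
  (∀ F : Finset (Sym2 V), ↑F ⊆ G.edgeSet → F.card = q →
      G.domNum < (G.subdiv F).domNum) ∧
  (∃ F : Finset (Sym2 V), ↑F ⊆ G.edgeSet ∧ F.card = q - 1 ∧
      (G.subdiv F).domNum = G.domNum)

/-- The corona `G ⊙ K₁`: attach one pendant leaf to every vertex of `G`. -/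
def SimpleGraph.corona {V : Type*} (G : SimpleGraph V) : SimpleGraph (V ⊕ V) :=
  SimpleGraph.fromRel (fun a b => match a, b with
    | Sum.inl u, Sum.inl v => G.Adj u v
    | Sum.inl u, Sum.inr v => u = v
    | _, _ => False)

/-!
If `T ≅ K_{1,r} ⊙ K_1` then `γ(T) = r + 1`. Subdividing edges that avoid the pendant edge at the
centre never raises `γ`, while subdividing all `2r + 1` edges does (by a packing argument), so
`q = 2r + 1 = n - 1`.

Conversely, if `q = n - 1` then all edges but one, `e`, can be subdivided without raising
`γ(T) ≤ n / 2` (Ore). In that subdivision every vertex dominates at most two original vertices,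
so a minimum dominating set covers them exactly once, in pairs joined by edges of `T`: a perfect
matching. Counting the subdivision vertices outside the dominating set shows that some vertex has
`n / 2 - 1` neighbours besides its partner, and a tree with such a vertex is a star corona.
-/

namespace Finset

variable {α β : Type*}

lemma covering_tight_of_card_le [Fintype β] (D : Finset α) (cov : α → Finset β) {k : ℕ}
    (hcov : ∀ x, ∃ d ∈ D, x ∈ cov d) (hle : ∀ d ∈ D, #(cov d) ≤ k)
    (hD : k * #D ≤ Fintype.card β) :
    k * #D = Fintype.card β ∧ (∀ d ∈ D, #(cov d) = k) ∧
      ∀ x, ∀ d ∈ D, ∀ d' ∈ D, x ∈ cov d → x ∈ cov d' → d = d' := by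
  classical
  choose σ hσD hσ using hcov
  have hfib (d : α) : univ.filter (fun x => σ x = d) ⊆ cov d :=
    fun x hx => (mem_filter.1 hx).2 ▸ hσ x
  have hsum : Fintype.card β = ∑ d ∈ D, #(univ.filter fun x => σ x = d) :=
    card_univ (α := β) ▸ card_eq_sum_card_fiberwise fun x _ => hσD x
  have hfib_le : ∀ d ∈ D, #(univ.filter fun x => σ x = d) ≤ #(cov d) :=
    fun d _ => card_le_card (hfib d)
  have h1 := sum_le_sum hfib_le
  have h2 : ∑ d ∈ D, #(cov d) ≤ k * #D := by rw [mul_comm]; simpa using sum_le_sum hle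
  -- `n = ∑ #fibre ≤ ∑ #cov ≤ k * #D ≤ n`, so every inequality is an equality.
  have hfib_eq := (sum_eq_sum_iff_of_le hfib_le).1 (by omega)
  have hcov_eq := (sum_eq_sum_iff_of_le hle).1 (by rw [sum_const, smul_eq_mul, mul_comm]; omega)
  refine ⟨by omega, hcov_eq, fun x d hd d' hd' hx hx' => ?_⟩
  have hσd (d : α) (hd : d ∈ D) (hx : x ∈ cov d) : σ x = d := by
    rw [← eq_of_subset_of_card_le (hfib d) (hfib_eq d hd).ge] at hx
    exact (mem_filter.1 hx).2
  rw [← hσd d hd hx, hσd d' hd' hx']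

lemma exists_involutive_of_pairs (D : Finset α) (cov : α → Finset β)
    (hcov : ∀ x, ∃ d ∈ D, x ∈ cov d) (htwo : ∀ d ∈ D, #(cov d) = 2)
    (huniq : ∀ x, ∀ d ∈ D, ∀ d' ∈ D, x ∈ cov d → x ∈ cov d' → d = d') :
    ∃ p : β → β, Function.Involutive p ∧
      ∀ x, p x ≠ x ∧ ∀ d ∈ D, x ∈ cov d → p x ∈ cov d := by
  classical
  have hpartner (x : β) : ∃ y, y ≠ x ∧ ∀ d ∈ D, x ∈ cov d → y ∈ cov d := by
    obtain ⟨d, hd, hx⟩ := hcov x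
    obtain ⟨y, hy, hyx⟩ := exists_mem_ne (by rw [htwo d hd]; norm_num) x
    exact ⟨y, hyx, fun d' hd' hx' => huniq x d hd d' hd' hx hx' ▸ hy⟩
  choose p hpx hp using hpartner
  refine ⟨p, fun x => ?_, fun x => ⟨hpx x, hp x⟩⟩
  obtain ⟨d, hd, hx⟩ := hcov x
  have h1 := hp x d hd hx
  have h2 := hp (p x) d hd h1
  obtain ⟨a, b, -, hab⟩ := card_eq_two.1 (htwo d hd)
  rw [hab] at hx h1 h2
  simp only [mem_insert, mem_singleton] at hx h1 h2
  have := hpx x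
  have := hpx (p x)
  grind

end Finset

namespace SimpleGraph

open Finset Function

section Domination

variable {V W : Type*} {G : SimpleGraph V} {H : SimpleGraph W}

lemma IsDomSet.exists_mem {D : Set V} (hD : G.IsDomSet D) (v : V) :
    ∃ u ∈ D, u = v ∨ G.Adj u v := by
  by_cases hv : v ∈ D
  · exact ⟨v, hv, Or.inl rfl⟩
  · obtain ⟨u, hu, huv⟩ := hD v hv
    exact ⟨u, hu, Or.inr huv⟩

lemma isDomSet_iff_forall_exists {D : Set V} : G.IsDomSet D ↔ ∀ v, ∃ u ∈ D, u = v ∨ G.Adj u v :=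
  ⟨IsDomSet.exists_mem, fun h v hv => (h v).imp fun _ ⟨hu, huv⟩ =>
    ⟨hu, huv.resolve_left fun huv => hv (huv ▸ hu)⟩⟩

variable [Fintype V] [Fintype W]

lemma exists_isDomSet_card_eq_domNum (G : SimpleGraph V) :
    ∃ D : Finset V, #D = G.domNum ∧ G.IsDomSet ↑D := by
  have hne : {k | ∃ D : Finset V, #D = k ∧ G.IsDomSet ↑D}.Nonempty :=
    ⟨_, univ, rfl, fun v hv => absurd (mem_coe.2 (mem_univ v)) hv⟩
  exact Nat.sInf_mem hne

lemma domNum_le_card {D : Finset V} (hD : G.IsDomSet ↑D) : G.domNum ≤ #D :=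
  Nat.sInf_le ⟨D, rfl, hD⟩

lemma card_le_domNum_of_pairwise_disjoint {J : Type*} [Fintype J] (y : J → V)
    (hy : ∀ i j d, (d = y i ∨ G.Adj d (y i)) → (d = y j ∨ G.Adj d (y j)) → i = j) :
    Fintype.card J ≤ G.domNum := by
  obtain ⟨D, hD, hdom⟩ := G.exists_isDomSet_card_eq_domNum
  choose d hdD hdy using fun i => hdom.exists_mem (y i)
  rw [← hD, ← card_univ]
  exact card_le_card_of_injOn d (fun i _ => hdD i)
    fun i _ j _ hij => hy i j (d i) (hdy i) (hij ▸ hdy j)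

/-- Ore: in a minimum dominating set every vertex has a neighbour outside it (otherwise it could
be dropped), so the complement dominates too. -/
lemma two_mul_domNum_le_card (hG : ∀ v, ∃ w, G.Adj v w) :
    2 * G.domNum ≤ Fintype.card V := by
  classical
  obtain ⟨D, hD, hdom⟩ := G.exists_isDomSet_card_eq_domNum
  have hout : ∀ v ∈ D, ∃ w ∉ D, G.Adj v w := by
    intro v hv
    by_contra! hin
    have herase : G.IsDomSet ↑(D.erase v) := by
      intro x hx
      obtain ⟨u, hu, hux⟩ := hdom.exists_mem x
      by_cases hxD : x ∈ D
      · obtain rfl : x = v := by_contra fun hxv => hx (mem_erase.2 ⟨hxv, hxD⟩)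
        obtain ⟨w, hw⟩ := hG x
        exact ⟨w, mem_erase.2 ⟨hw.ne', by_contra fun hwD => hin w hwD hw⟩, hw.symm⟩
      · obtain rfl | hux := hux
        · exact absurd hu hxD
        have huv : u ≠ v := by rintro rfl; exact hin x hxD hux
        exact ⟨u, mem_erase.2 ⟨huv, hu⟩, hux⟩
    have := domNum_le_card herase
    have := card_erase_lt_of_mem hv
    omega
  have hcompl : G.IsDomSet ↑(univ \ D) := by
    intro v hv
    obtain ⟨w, hwD, hvw⟩ := hout v (by simpa using hv)
    exact ⟨w, by simpa using hwD, hvw.symm⟩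
  have := domNum_le_card hcompl
  rw [card_sdiff_of_subset (subset_univ D), card_univ] at this
  have := card_le_univ D
  omega

lemma domNum_le_of_iso (φ : G ≃g H) : H.domNum ≤ G.domNum := by
  classical
  obtain ⟨D, hD, hdom⟩ := G.exists_isDomSet_card_eq_domNum
  refine (domNum_le_card (D := D.map φ.toEquiv.toEmbedding) fun w hw => ?_).trans
    ((card_map _).trans hD).le
  obtain ⟨u, hu, hadj⟩ := hdom (φ.symm w) fun h => hw (mem_map.2 ⟨_, h, by simp⟩)
  exact ⟨φ u, by simpa using hu, by simpa using φ.map_rel_iff.2 hadj⟩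

lemma Iso.domNum_eq (φ : G ≃g H) : G.domNum = H.domNum :=
  le_antisymm (domNum_le_of_iso φ.symm) (domNum_le_of_iso φ)

end Domination

section Subdivision

variable {V W : Type*} {G : SimpleGraph V} {H : SimpleGraph W} {F : Finset (Sym2 V)}

@[simp] lemma subdiv_adj_inl_inl {u v : V} :
    (G.subdiv F).Adj (.inl u) (.inl v) ↔ G.Adj u v ∧ s(u, v) ∉ F := by
  simp only [subdiv, fromRel_adj]
  constructor
  · rintro ⟨-, h | ⟨h, h'⟩⟩
    · exact h
    · exact ⟨h.symm, Sym2.eq_swap ▸ h'⟩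
  · intro h
    exact ⟨by simpa using h.1.ne, Or.inl h⟩

@[simp] lemma subdiv_adj_inl_inr {u : V} {e : F} :
    (G.subdiv F).Adj (.inl u) (.inr e) ↔ u ∈ (e : Sym2 V) := by
  simp [subdiv]

@[simp] lemma subdiv_adj_inr_inl {u : V} {e : F} :
    (G.subdiv F).Adj (.inr e) (.inl u) ↔ u ∈ (e : Sym2 V) := by
  simp [subdiv]

@[simp] lemma not_subdiv_adj_inr_inr {e f : F} : ¬(G.subdiv F).Adj (.inr e) (.inr f) := by
  simp [subdiv]

noncomputable def Iso.subdiv (φ : G ≃g H) (F : Finset (Sym2 V)) :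
    G.subdiv F ≃g H.subdiv (F.map φ.toEquiv.toEmbedding.sym2Map) where
  toEquiv := .sumCongr φ.toEquiv (F.equivMap _)
  map_rel_iff' := by
    have hmap (z : Sym2 V) (x y : V) : Sym2.map φ z = s(φ x, φ y) ↔ z = s(x, y) := by
      rw [← Sym2.map_mk]; exact (Sym2.map.injective φ.injective).eq_iff
    rintro (x | ⟨e, he⟩) (y | ⟨f, hf⟩) <;> simp [hmap, φ.map_adj_iff]

lemma coe_map_sym2Map_subset_edgeSet (φ : G ≃g H) (hF : ↑F ⊆ G.edgeSet) :
    ↑(F.map φ.toEquiv.toEmbedding.sym2Map) ⊆ H.edgeSet := by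
  intro e he
  obtain ⟨e, he', rfl⟩ := mem_map.1 he
  exact φ.toHom.map_mem_edgeSet (hF he')

end Subdivision

section Criticality

variable {V W : Type*} [Fintype V] [Fintype W] {G : SimpleGraph V} {H : SimpleGraph W}

lemma IsQCritical.of_iso {q : ℕ} (φ : G ≃g H) (h : G.IsQCritical q) : H.IsQCritical q := by
  refine ⟨fun F hF hFq => ?_, ?_⟩
  · have := h.1 _ (coe_map_sym2Map_subset_edgeSet φ.symm hF) (by rwa [card_map])
    rwa [φ.domNum_eq, ← (φ.symm.subdiv F).domNum_eq] at this
  · obtain ⟨F, hF, hFq, hγ⟩ := h.2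
    refine ⟨_, coe_map_sym2Map_subset_edgeSet φ hF, by rwa [card_map], ?_⟩
    rw [← (φ.subdiv F).domNum_eq, hγ, φ.domNum_eq]

lemma IsQCritical.eq_card_edgeFinset [Fintype G.edgeSet] {q : ℕ} (h : G.IsQCritical q)
    {e : Sym2 V} (he : e ∈ G.edgeSet)
    (hsub : ∀ F : Finset (Sym2 V), ↑F ⊆ G.edgeSet → e ∉ F → (G.subdiv F).domNum ≤ G.domNum)
    (hall : ∀ F : Finset (Sym2 V), ↑F = G.edgeSet → G.domNum < (G.subdiv F).domNum) :
    q = #G.edgeFinset := by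
  classical
  have he' : e ∈ G.edgeFinset := mem_edgeFinset.2 he
  refine le_antisymm ?_ ?_
  · by_contra! hq
    obtain ⟨F, hF, hFq, hγ⟩ := h.2
    have hFE : F = G.edgeFinset := eq_of_subset_of_card_le
      (fun f hf => mem_edgeFinset.2 (hF hf)) (by omega)
    exact (hall F (by simp [hFE])).ne hγ.symm
  · by_contra! hq
    obtain ⟨F, hFsub, hFq⟩ := exists_subset_card_eq
      (s := G.edgeFinset.erase e) (n := q) (by rw [card_erase_of_mem he']; omega)
    have hF : ↑F ⊆ G.edgeSet := fun f hf => mem_edgeFinset.1 (mem_of_mem_erase (hFsub hf))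
    exact (h.1 F hF hFq).not_ge (hsub F hF fun heF => notMem_erase e _ (hFsub heF))

end Criticality

section Corona

variable {V W : Type*} {G : SimpleGraph V} {H : SimpleGraph W}

@[simp] lemma corona_adj_inl_inl {u v : V} : G.corona.Adj (.inl u) (.inl v) ↔ G.Adj u v := by
  simp only [corona, fromRel_adj]
  exact ⟨fun ⟨_, h⟩ => h.elim id .symm, fun h => ⟨by simpa using h.ne, .inl h⟩⟩

@[simp] lemma corona_adj_inl_inr {u v : V} : G.corona.Adj (.inl u) (.inr v) ↔ u = v := by
  simp [corona]

@[simp] lemma corona_adj_inr_inl {u v : V} : G.corona.Adj (.inr u) (.inl v) ↔ v = u := by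
  simp [corona]

@[simp] lemma not_corona_adj_inr_inr {u v : V} : ¬G.corona.Adj (.inr u) (.inr v) := by
  simp [corona]

lemma mem_edgeSet_corona {e : Sym2 (V ⊕ V)} (he : e ∈ G.corona.edgeSet) :
    (∃ u v, G.Adj u v ∧ e = s(.inl u, .inl v)) ∨ ∃ v, e = s(.inl v, .inr v) := by
  induction e using Sym2.ind with
  | _ x y =>
    rcases x with u | u <;> rcases y with v | v <;> simp at he
    · exact .inl ⟨u, v, he, rfl⟩
    · exact .inr ⟨u, he ▸ rfl⟩
    · exact .inr ⟨v, he ▸ Sym2.eq_swap⟩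

def Hom.coronaLift (f : G →g H) (g : V → W) (hg : ∀ v, H.Adj (f v) (g v)) :
    G.corona →g H where
  toFun := Sum.elim f g
  map_rel' := by
    rintro (u | u) (v | v) h <;> simp at h
    · exact f.map_rel h
    · exact h ▸ hg u
    · exact h ▸ (hg v).symm

variable [Fintype V]

lemma card_edgeFinset_corona [Fintype G.edgeSet] [Fintype G.corona.edgeSet] :
    #G.corona.edgeFinset = #G.edgeFinset + Fintype.card V := by
  classical
  let leaf : V ↪ Sym2 (V ⊕ V) := ⟨fun v => s(.inl v, .inr v), fun u v h => by simpa using h⟩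
  have hdisj : Disjoint (G.edgeFinset.map Embedding.inl.sym2Map) (univ.map leaf) := by
    refine Finset.disjoint_left.2 fun _ he he' => ?_
    obtain ⟨e, -, rfl⟩ := mem_map.1 he
    obtain ⟨v, -, hv⟩ := mem_map.1 he'
    induction e using Sym2.ind
    change s(Sum.inl v, Sum.inr v) = _ at hv
    simp at hv
  have hedges : G.corona.edgeFinset = (G.edgeFinset.map Embedding.inl.sym2Map).disjUnion
      (univ.map leaf) hdisj := by
    ext e
    simp only [mem_edgeFinset, mem_disjUnion, mem_map, mem_univ, true_and]
    constructor
    · rintro he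
      rcases mem_edgeSet_corona he with ⟨u, v, huv, rfl⟩ | ⟨v, rfl⟩
      · exact .inl ⟨s(u, v), huv, rfl⟩
      · exact .inr ⟨v, rfl⟩
    · rintro (⟨e, he, rfl⟩ | ⟨v, rfl⟩)
      · induction e using Sym2.ind
        simpa using he
      · show s(Sum.inl v, Sum.inr v) ∈ _
        simp
  rw [hedges, card_disjUnion, card_map, card_map, card_univ]

lemma domNum_corona : G.corona.domNum = Fintype.card V := by
  refine le_antisymm ((domNum_le_card (D := univ.map .inl) ?_).trans (by simp)) ?_
  · rintro (v | v) hv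
    · simp at hv
    · exact ⟨.inl v, by simp, by simp⟩
  · refine card_le_domNum_of_pairwise_disjoint (G := G.corona) Sum.inr ?_
    rintro i j (d | d) hi hj <;> simp_all

/-- Once every edge is subdivided, the leaves and the subdivision vertex of one edge of `G` have
pairwise disjoint closed neighbourhoods. -/
lemma card_lt_domNum_subdiv_corona {F : Finset (Sym2 (V ⊕ V))} (hF : ↑F = G.corona.edgeSet)
    {x y : V} (hxy : G.Adj x y) : Fintype.card V < (G.corona.subdiv F).domNum := by
  set S := G.corona.subdiv F
  let m : (V ⊕ V) ⊕ F := .inr ⟨s(.inl x, .inl y), by rw [← mem_coe, hF]; simpa using hxy⟩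
  have hleaf (v : V) (d : (V ⊕ V) ⊕ F) (hd : d = .inl (.inr v) ∨ S.Adj d (.inl (.inr v))) :
      d = .inl (.inr v) ∨ ∃ g : F, d = .inr g ∧ (g : Sym2 (V ⊕ V)) = s(.inl v, .inr v) := by
    rcases hd with rfl | hd
    · exact .inl rfl
    rcases d with w | ⟨g, hg⟩
    · simp only [S, subdiv_adj_inl_inl] at hd
      exact absurd (by rw [← mem_coe, hF]; exact hd.1) hd.2
    · have hg' : g ∈ G.corona.edgeSet := by rw [← hF]; exact hg
      simp only [S, subdiv_adj_inr_inl] at hd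
      rcases mem_edgeSet_corona hg' with ⟨a, b, -, rfl⟩ | ⟨w, rfl⟩
      · simp at hd
      · obtain rfl : v = w := by simpa using hd
        exact .inr ⟨_, rfl, rfl⟩
  have hmid (d : (V ⊕ V) ⊕ F) (hd : d = m ∨ S.Adj d m) :
      d = m ∨ d = .inl (.inl x) ∨ d = .inl (.inl y) := by
    rcases hd with rfl | hd
    · exact .inl rfl
    rcases d with w | g
    · simp only [S, m, subdiv_adj_inl_inr, Sym2.mem_iff] at hd
      rcases hd with rfl | rfl <;> simp
    · exact absurd hd not_subdiv_adj_inr_inr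
  have := card_le_domNum_of_pairwise_disjoint (G := S)
    (Option.elim · m (fun v => .inl (.inr v))) ?_
  · simpa using this
  rintro (_ | i) (_ | j) d hi hj
  · rfl
  · rcases hmid d hi with rfl | rfl | rfl <;> rcases hleaf j _ hj with h | ⟨g, h, hg⟩ <;>
      clear hi hj hleaf hmid <;> simp_all [m, Subtype.ext_iff]
  · rcases hmid d hj with rfl | rfl | rfl <;> rcases hleaf i _ hi with h | ⟨g, h, hg⟩ <;>
      clear hi hj hleaf hmid <;> simp_all [m, Subtype.ext_iff]
  · rcases hleaf i d hi with rfl | ⟨g, rfl, hg⟩ <;> rcases hleaf j _ hj with h | ⟨g', h, hg'⟩ <;>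
      clear hi hj hleaf hmid <;> simp_all

end Corona

section StarCorona

variable {β : Type*} [Fintype β]

/-- The centre together with, for each leaf `i` of the star, `i` or the subdivision vertex of its
pendant edge still dominates. -/
lemma domNum_subdiv_starCorona_le {F : Finset (Sym2 ((Fin 1 ⊕ β) ⊕ (Fin 1 ⊕ β)))}
    (hF : ↑F ⊆ (completeBipartiteGraph (Fin 1) β).corona.edgeSet)
    (hc : s(.inl (.inl 0), .inr (.inl 0)) ∉ F) :
    ((completeBipartiteGraph (Fin 1) β).corona.subdiv F).domNum ≤ Fintype.card β + 1 := by
  classical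
  set S := (completeBipartiteGraph (Fin 1) β).corona.subdiv F
  let f (i : β) : ((Fin 1 ⊕ β) ⊕ (Fin 1 ⊕ β)) ⊕ F :=
    if h : s(.inl (.inr i), .inr (.inr i)) ∈ F then .inr ⟨_, h⟩ else .inl (.inl (.inr i))
  let D := insert (.inl (.inl (.inl 0))) (univ.image f)
  have hfD (i : β) : f i ∈ D := mem_insert_of_mem (mem_image_of_mem f (mem_univ i))
  have hleaf (i : β) (w) (hw : w = .inl (.inl (.inr i)) ∨ w = .inl (.inr (.inr i))) :
      ∃ u ∈ D, u = w ∨ S.Adj u w := by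
    refine ⟨f i, hfD i, ?_⟩
    by_cases h : s(.inl (.inr i), .inr (.inr i)) ∈ F
    · rw [show f i = .inr ⟨_, h⟩ from dif_pos h]
      rcases hw with rfl | rfl <;> simp [S]
    · rw [show f i = .inl (.inl (.inr i)) from dif_neg h]
      rcases hw with rfl | rfl
      · exact .inl rfl
      · simpa [S] using h
  have hdom : S.IsDomSet ↑D := by
    refine isDomSet_iff_forall_exists.2 ?_
    rintro (((c | i) | (c | i)) | ⟨g, hg⟩)
    · exact ⟨_, mem_insert_self _ _, .inl (by rw [Subsingleton.elim c 0])⟩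
    · exact hleaf i _ (by simp)
    · refine ⟨_, mem_insert_self _ _, .inr ?_⟩
      rw [Subsingleton.elim c 0]
      simpa [S] using hc
    · exact hleaf i _ (by simp)
    · rcases mem_edgeSet_corona (hF hg) with ⟨a, b, hab, rfl⟩ | ⟨(c | i), rfl⟩
      · refine ⟨_, mem_insert_self _ _, .inr ?_⟩
        rcases a with a | a <;> rcases b with b | b <;> simp at hab
        · simp [S, Subsingleton.elim a 0]
        · simp [S, Subsingleton.elim b 0]
      · exact absurd hg (Subsingleton.elim c 0 ▸ hc)
      · exact ⟨f i, hfD i, .inl (dif_pos hg)⟩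
  refine (domNum_le_card hdom).trans ((card_insert_le _ _).trans ?_)
  simpa using card_image_le (s := univ) (f := f)

lemma card_edgeFinset_starCorona [Fintype (completeBipartiteGraph (Fin 1) β).corona.edgeSet] :
    #(completeBipartiteGraph (Fin 1) β).corona.edgeFinset = 2 * Fintype.card β + 1 := by
  classical
  have hstar : #(completeBipartiteGraph (Fin 1) β).edgeFinset = Fintype.card β := by
    have := encard_edgeSet_completeBipartiteGraph (W₁ := Fin 1) (W₂ := β)
    rw [← coe_edgeFinset, Set.encard_coe_eq_coe_finsetCard] at this
    simpa using this
  rw [card_edgeFinset_corona, hstar, Fintype.card_sum, Fintype.card_fin]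
  ring

lemma IsQCritical.eq_card_sub_one_of_iso_starCorona [Nonempty β] {V : Type*} [Fintype V]
    {T : SimpleGraph V} {q : ℕ} (φ : T ≃g (completeBipartiteGraph (Fin 1) β).corona)
    (h : T.IsQCritical q) : q = Fintype.card V - 1 := by
  classical
  obtain ⟨i⟩ := ‹Nonempty β›
  have hV : Fintype.card V = 2 * Fintype.card β + 2 := by
    rw [Fintype.card_congr φ.toEquiv]
    simp only [Fintype.card_sum, Fintype.card_fin]
    ring
  rw [(h.of_iso φ).eq_card_edgeFinset (e := s(.inl (.inl 0), .inr (.inl 0))) (by simp)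
    (fun F hF hc => by simpa [domNum_corona, add_comm] using domNum_subdiv_starCorona_le hF hc)
    (fun F hF => by simpa [domNum_corona] using
      card_lt_domNum_subdiv_corona (x := .inl 0) (y := .inr i) hF (by simp)),
    card_edgeFinset_starCorona, hV]
  omega

end StarCorona

section TreeRecognition

variable {V W : Type*} {G : SimpleGraph V} {H : SimpleGraph W}

lemma Hom.nonempty_iso_of_bijective [Fintype G.edgeSet] [Fintype H.edgeSet] (f : G →g H)
    (hf : Bijective f) (hE : #H.edgeFinset ≤ #G.edgeFinset) : Nonempty (G ≃g H) := by
  have hinj := Hom.mapEdgeSet.injective f hf.1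
  have hcard : Fintype.card G.edgeSet = Fintype.card H.edgeSet :=
    le_antisymm (Fintype.card_le_of_injective _ hinj) (by simpa [edgeFinset_card] using hE)
  have hsurj : Surjective f.mapEdgeSet :=
    ((Fintype.bijective_iff_injective_and_card _).2 ⟨hinj, hcard⟩).2
  refine ⟨{ toEquiv := .ofBijective f hf, map_rel_iff' := fun {x y} => ⟨fun h => ?_, f.map_rel⟩ }⟩
  obtain ⟨⟨e, he⟩, hxy⟩ := hsurj ⟨s(f x, f y), h⟩
  have hmap : Sym2.map f e = s(f x, f y) := congrArg Subtype.val hxy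
  rw [← Sym2.map_mk] at hmap
  rwa [Sym2.map.injective hf.1 hmap] at he

/-- The star on `c` and its neighbours other than `p c`, extended by `p`, is an injective
homomorphism from a star corona (a collision would be a triangle); it is bijective by counting
vertices and an isomorphism by counting edges. -/
theorem IsTree.exists_iso_starCorona [Fintype V] {T : SimpleGraph V} (hT : T.IsTree) {p : V → V}
    (hp : Involutive p) (hadj : ∀ x, T.Adj x (p x)) (c : V)
    (hc : Fintype.card V ≤ 2 * Nat.card {a // T.Adj c a ∧ a ≠ p c} + 2) :
    ∃ r, Fintype.card V = 2 * r + 2 ∧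
      Nonempty (T ≃g (completeBipartiteGraph (Fin 1) (Fin r)).corona) := by
  classical
  set r := Nat.card {a // T.Adj c a ∧ a ≠ p c}
  let enum : Fin r ≃ {a // T.Adj c a ∧ a ≠ p c} := (Finite.equivFin _).symm
  let a (i : Fin r) : V := enum i
  have ha_inj : Injective a := Subtype.val_injective.comp enum.injective
  have ha (i : Fin r) : T.Adj c (a i) ∧ a i ≠ p c := (enum i).2
  let star : completeBipartiteGraph (Fin 1) (Fin r) →g T :=
    ⟨Sum.elim (fun _ => c) a, by
      rintro (_ | i) (_ | j) h <;> simp at h ⊢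
      exacts [(ha j).1, (ha i).1.symm]⟩
  have hstar_inj : Injective star :=
    Injective.sumElim (fun _ _ _ => Subsingleton.elim _ _) ha_inj fun _ i h => (ha i).1.ne h
  let Ψ := star.coronaLift (p ∘ star) fun _ => hadj _
  have hΨ_inj : Injective Ψ := by
    refine hstar_inj.sumElim (hp.injective.comp hstar_inj) ?_
    rintro (_ | i) (_ | j) h <;> simp only [star, RelHom.coeFn_mk, Sum.elim_inl, Sum.elim_inr,
      comp_apply] at h
    · exact (hadj c).ne h
    · exact (ha j).2 (by rw [h, hp])
    · exact (ha i).2 h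
    · refine hT.isAcyclic.cliqueFree le_rfl {c, a i, a j} (is3Clique_triple_iff.2 ?_)
      exact ⟨(ha i).1, (ha j).1, h ▸ (hadj (a j)).symm⟩
  have hΨ_card := Fintype.card_le_of_injective Ψ hΨ_inj
  simp only [Fintype.card_sum, Fintype.card_fin] at hΨ_card
  refine ⟨r, by omega, (Ψ.nonempty_iso_of_bijective ?_ ?_).map Iso.symm⟩
  · exact (Fintype.bijective_iff_injective_and_card Ψ).2 ⟨hΨ_inj, by simp; omega⟩
  · have := hT.card_edgeFinset
    rw [card_edgeFinset_starCorona, Fintype.card_fin]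
    omega

end TreeRecognition

section AllButOneSubdivided

variable {V : Type*} {T : SimpleGraph V} {F : Finset (Sym2 V)} {e : Sym2 V}

lemma exists_neighbor_eq_of_inr_notMem (hF : ↑F ⊆ T.edgeSet)
    (hS : ∀ x y, (T.subdiv F).Adj (.inl x) (.inl y) ↔ s(x, y) = e)
    {D : Finset (V ⊕ F)} (hD : (T.subdiv F).IsDomSet ↑D) {p : V → V}
    (hinl : ∀ w, .inl w ∈ D → s(w, p w) = e ∧ .inl (p w) ∉ D) {w : V} (hw : .inl w ∈ D)
    (f : F) (hf : .inr f ∉ D) : ∃ a : {a // T.Adj w a ∧ a ≠ p w}, s(w, a.1) = f := by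
  obtain ⟨y | g, hy, hyf⟩ := hD (.inr f) (by simpa using hf)
  swap
  · exact absurd hyf not_subdiv_adj_inr_inr
  obtain rfl : y = w := by
    rcases Sym2.eq_iff.1 ((hinl y hy).1.trans (hinl w hw).1.symm) with ⟨h, -⟩ | ⟨h, -⟩
    exacts [h, absurd (h ▸ hy) (hinl w hw).2]
  obtain ⟨a, ha⟩ := Sym2.mem_iff_exists.1 (subdiv_adj_inl_inr.1 hyf)
  refine ⟨⟨a, (mem_edgeSet T).1 (ha ▸ hF f.2), ?_⟩, ha.symm⟩
  rintro rfl
  exact (subdiv_adj_inl_inl.1 ((hS y (p y)).2 (hinl y hy).1)).2 (ha ▸ f.2)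

variable [Fintype V]

open Classical in
noncomputable def subdivDominated (T : SimpleGraph V) (F : Finset (Sym2 V)) (d : V ⊕ F) :
    Finset V :=
  {x | d = .inl x ∨ (T.subdiv F).Adj d (.inl x)}

lemma mem_subdivDominated_inl {w x : V} :
    x ∈ T.subdivDominated F (.inl w) ↔ w = x ∨ (T.subdiv F).Adj (.inl w) (.inl x) := by
  simp [subdivDominated]

lemma mem_subdivDominated_inr {f : F} {x : V} :
    x ∈ T.subdivDominated F (.inr f) ↔ x ∈ (f : Sym2 V) := by
  simp [subdivDominated]

lemma IsDomSet.exists_mem_subdivDominated {D : Finset (V ⊕ F)} (hD : (T.subdiv F).IsDomSet ↑D)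
    (x : V) : ∃ d ∈ D, x ∈ T.subdivDominated F d := by
  obtain ⟨d, hd, hdx⟩ := hD.exists_mem (.inl x)
  exact ⟨d, hd, by simpa [subdivDominated] using hdx⟩

lemma card_subdivDominated_le_two (hS : ∀ x y, (T.subdiv F).Adj (.inl x) (.inl y) ↔ s(x, y) = e)
    (d : V ⊕ F) : #(T.subdivDominated F d) ≤ 2 := by
  classical
  have hz (z : Sym2 V) : #z.toFinset ≤ 2 := by
    induction z using Sym2.ind
    rw [Sym2.toFinset_mk_eq]
    exact card_le_two
  rcases d with w | f
  · by_cases hw : w ∈ e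
    · refine (card_le_card fun x hx => ?_).trans (hz e)
      rcases mem_subdivDominated_inl.1 hx with rfl | hx
      exacts [Sym2.mem_toFinset.2 hw, Sym2.mem_toFinset.2 ((hS w x).1 hx ▸ Sym2.mem_mk_right _ _)]
    · refine (card_le_card (t := {w}) fun x hx => ?_).trans (by simp)
      rcases mem_subdivDominated_inl.1 hx with rfl | hx
      exacts [mem_singleton_self _, absurd ((hS w x).1 hx ▸ Sym2.mem_mk_left _ _) hw]
  · exact (card_le_card fun x hx =>
      Sym2.mem_toFinset.2 (mem_subdivDominated_inr.1 hx)).trans (hz _)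

lemma adj_of_mem_subdivDominated (he : e ∈ T.edgeSet) (hF : ↑F ⊆ T.edgeSet)
    (hS : ∀ x y, (T.subdiv F).Adj (.inl x) (.inl y) ↔ s(x, y) = e) {d : V ⊕ F} {x y : V}
    (hx : x ∈ T.subdivDominated F d) (hy : y ∈ T.subdivDominated F d) (hxy : x ≠ y) :
    T.Adj x y := by
  rcases d with w | f
  · rw [mem_subdivDominated_inl, hS] at hx hy
    rcases hx with rfl | rfl <;> rcases hy with rfl | hy
    · exact absurd rfl hxy
    · exact (mem_edgeSet T).1 (hy ▸ he)
    · exact (he : T.Adj w x).symm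
    · exact absurd (Sym2.congr_right.1 hy.symm) hxy
  · rw [mem_subdivDominated_inr] at hx hy
    rw [← mem_edgeSet, ← (Sym2.mem_and_mem_iff hxy).1 ⟨hx, hy⟩]
    exact hF f.2

/-- Each member of `D` dominates at most two original vertices, and these are adjacent in `T`;
so `D` dominates every original vertex exactly once, in pairs forming a perfect matching. -/
lemma exists_involution_of_isDomSet_subdiv (he : e ∈ T.edgeSet) (hF : ↑F ⊆ T.edgeSet)
    (hS : ∀ x y, (T.subdiv F).Adj (.inl x) (.inl y) ↔ s(x, y) = e)
    {D : Finset (V ⊕ F)} (hD : (T.subdiv F).IsDomSet ↑D) (hDcard : 2 * #D ≤ Fintype.card V) :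
    ∃ p : V → V, Involutive p ∧ (∀ x, T.Adj x (p x)) ∧ 2 * #D = Fintype.card V ∧
      (∀ w, .inl w ∈ D → s(w, p w) = e ∧ .inl (p w) ∉ D) ∧
      ∀ x (f : F), .inr f ∈ D → x ∈ (f : Sym2 V) → (f : Sym2 V) = s(x, p x) := by
  obtain ⟨h2D, htwo, huniq⟩ := covering_tight_of_card_le D (T.subdivDominated F)
    hD.exists_mem_subdivDominated (fun d _ => card_subdivDominated_le_two hS d) hDcard
  obtain ⟨p, hp, hpx⟩ :=
    exists_involutive_of_pairs D _ hD.exists_mem_subdivDominated htwo huniq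
  have hw (w : V) : w ∈ T.subdivDominated F (.inl w) := mem_subdivDominated_inl.2 (.inl rfl)
  refine ⟨p, hp, fun x => ?_, h2D, fun w hwD => ⟨?_, fun hpw => ?_⟩, fun x f hf hx => ?_⟩
  · obtain ⟨d, hd, hx⟩ := hD.exists_mem_subdivDominated x
    exact adj_of_mem_subdivDominated he hF hS hx ((hpx x).2 d hd hx) (hpx x).1.symm
  · have := mem_subdivDominated_inl.1 ((hpx w).2 _ hwD (hw w))
    exact (hS w (p w)).1 (this.resolve_left (hpx w).1.symm)
  · exact (hpx w).1 <| Sum.inl_injective <|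
      huniq (p w) _ hpw _ hwD (hw (p w)) ((hpx w).2 _ hwD (hw w))
  · have hpf := mem_subdivDominated_inr.1 ((hpx x).2 _ hf (mem_subdivDominated_inr.2 hx))
    exact (Sym2.mem_and_mem_iff (hpx x).1.symm).1 ⟨hx, hpf⟩

/-- The subdivision vertices outside `D` hang off `w`, one for each neighbour `a ≠ p w`, and at
most `#D - 1` of them lie in `D`. -/
lemma card_le_of_inl_mem_subdiv (hF : ↑F ⊆ T.edgeSet) (hFcard : #F + 2 = Fintype.card V)
    (hS : ∀ x y, (T.subdiv F).Adj (.inl x) (.inl y) ↔ s(x, y) = e)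
    {D : Finset (V ⊕ F)} (hD : (T.subdiv F).IsDomSet ↑D) {p : V → V}
    (h2D : 2 * #D = Fintype.card V) (hinl : ∀ w, .inl w ∈ D → s(w, p w) = e ∧ .inl (p w) ∉ D)
    {w : V} (hw : .inl w ∈ D) :
    Fintype.card V ≤ 2 * Nat.card {a // T.Adj w a ∧ a ≠ p w} + 2 := by
  classical
  have hout : #(univ.filter fun f : F => .inr f ∉ D) ≤ Nat.card {a // T.Adj w a ∧ a ≠ p w} := by
    rw [Nat.card_eq_fintype_card, ← card_univ, ← card_map (Embedding.subtype _)]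
    refine (card_le_card fun z hz => ?_).trans (card_image_le (f := fun a => s(w, a.1)))
    obtain ⟨f, hf, rfl⟩ := mem_map.1 hz
    obtain ⟨a, ha⟩ := exists_neighbor_eq_of_inr_notMem hF hS hD hinl hw f (mem_filter.1 hf).2
    exact mem_image.2 ⟨a, mem_univ _, ha⟩
  have hin : #(univ.filter fun f : F => .inr f ∈ D) + 1 ≤ #D := by
    rw [← card_map Embedding.inr, ← card_insert_of_notMem (a := .inl w) (by simp)]
    refine card_le_card (insert_subset hw fun d hd => ?_)
    obtain ⟨f, hf, rfl⟩ := mem_map.1 hd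
    exact (mem_filter.1 hf).2
  have := card_filter_add_card_filter_not (s := (univ : Finset F)) (fun f => .inr f ∈ D)
  rw [card_univ, Fintype.card_coe] at this
  omega

/-- Without original vertices, `D` must contain every subdivision vertex, so `n - 2 ≤ n / 2`;
an endpoint of `e` then has the other endpoint as a neighbour besides its partner. -/
lemma exists_card_le_of_forall_inl_notMem_subdiv (hFcard : #F + 2 = Fintype.card V)
    (hS : ∀ x y, (T.subdiv F).Adj (.inl x) (.inl y) ↔ s(x, y) = e)
    {D : Finset (V ⊕ F)} (hD : (T.subdiv F).IsDomSet ↑D) {p : V → V}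
    (h2D : 2 * #D = Fintype.card V)
    (hinr : ∀ x (f : F), .inr f ∈ D → x ∈ (f : Sym2 V) → (f : Sym2 V) = s(x, p x))
    (hA : ∀ w, .inl w ∉ D) :
    ∃ c, Fintype.card V ≤ 2 * Nat.card {a // T.Adj c a ∧ a ≠ p c} + 2 := by
  classical
  induction e using Sym2.ind with | _ u v => ?_
  refine ⟨u, ?_⟩
  have hFD : #(univ : Finset F) ≤ #D := by
    rw [← card_map Embedding.inr]
    refine card_le_card fun d hd => ?_
    obtain ⟨f, -, rfl⟩ := mem_map.1 hd
    by_contra hf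
    obtain ⟨y | g, hy, hyf⟩ := hD (.inr f) (by simpa using hf)
    exacts [hA y hy, not_subdiv_adj_inr_inr hyf]
  rw [card_univ, Fintype.card_coe] at hFD
  have huv := subdiv_adj_inl_inl.1 ((hS u v).2 rfl)
  have hv : 0 < Nat.card {a // T.Adj u a ∧ a ≠ p u} := by
    refine Nat.card_pos_iff.2 ⟨⟨v, huv.1, fun hv => ?_⟩, inferInstance⟩
    obtain ⟨y | f, hf, hfu⟩ := hD.exists_mem (.inl u)
    · exact hA y hf
    · simp only [reduceCtorEq, false_or, subdiv_adj_inr_inl] at hfu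
      exact huv.2 (hv ▸ hinr u f hf hfu ▸ f.2)
  omega

theorem IsTree.exists_iso_starCorona_of_domNum_subdiv (hT : T.IsTree)
    (hn : 3 ≤ Fintype.card V) (hF : ↑F ⊆ T.edgeSet) (hFcard : #F = Fintype.card V - 2)
    (hγ : (T.subdiv F).domNum = T.domNum) :
    ∃ r, 1 ≤ r ∧ Nonempty (T ≃g (completeBipartiteGraph (Fin 1) (Fin r)).corona) := by
  classical
  have hE := hT.card_edgeFinset
  obtain ⟨e, he⟩ : ∃ e, T.edgeFinset \ F = {e} := card_eq_one.1 <| by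
    rw [card_sdiff_of_subset fun f hf => mem_edgeFinset.2 (hF hf)]
    omega
  have heE : e ∈ T.edgeSet := mem_edgeFinset.1 (mem_sdiff.1 (he ▸ mem_singleton_self e)).1
  have hS (x y : V) : (T.subdiv F).Adj (.inl x) (.inl y) ↔ s(x, y) = e := by
    rw [subdiv_adj_inl_inl, ← mem_edgeSet, ← mem_edgeFinset, ← mem_sdiff, he, mem_singleton]
  obtain ⟨D, hD, hdom⟩ := (T.subdiv F).exists_isDomSet_card_eq_domNum
  have hDcard : 2 * #D ≤ Fintype.card V := by
    have : Nontrivial V := Fintype.one_lt_card_iff_nontrivial.1 (by omega)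
    rw [hD, hγ]
    exact two_mul_domNum_le_card hT.connected.preconnected.exists_adj_of_nontrivial
  obtain ⟨p, hp, hpadj, h2D, hinl, hinr⟩ :=
    exists_involution_of_isDomSet_subdiv heE hF hS hdom hDcard
  obtain ⟨c, hc⟩ : ∃ c, Fintype.card V ≤ 2 * Nat.card {a // T.Adj c a ∧ a ≠ p c} + 2 := by
    by_cases hA : ∃ w, .inl w ∈ D
    · obtain ⟨w, hw⟩ := hA
      exact ⟨w, card_le_of_inl_mem_subdiv hF (by omega) hS hdom h2D hinl hw⟩
    · exact exists_card_le_of_forall_inl_notMem_subdiv (by omega) hS hdom h2D hinr (not_exists.1 hA)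
  obtain ⟨r, hr, hφ⟩ := hT.exists_iso_starCorona hp hpadj c hc
  exact ⟨r, by omega, hφ⟩

end AllButOneSubdivided

end SimpleGraph

theorem stmt16 {V : Type*} [Fintype V] (T : SimpleGraph V) (hT : T.IsTree)
    (hn : 3 ≤ Fintype.card V) (q : ℕ) (h : T.IsQCritical q) :
    q = Fintype.card V - 1 ↔
      ∃ r : ℕ, 1 ≤ r ∧
        Nonempty (T ≃g (completeBipartiteGraph (Fin 1) (Fin r)).corona) := by
  constructor
  · intro hq
    obtain ⟨F, hF, hFcard, hγ⟩ := h.2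
    exact hT.exists_iso_starCorona_of_domNum_subdiv hn hF (by omega) hγ
  · rintro ⟨r, hr, ⟨φ⟩⟩
    have : Nonempty (Fin r) := Fin.pos_iff_nonempty.1 hr
    exact h.eq_card_sub_one_of_iso_starCorona φ
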